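/- Let F_m(φ) = 2^{−m/2} max_{Π} ⟨φ|Π|φ⟩ where the max is over rank-2^m stabilizer projectors on n qubits. Then for any unit vector φ and any m ≥ 1: F_{m−1}(φ) ≥ 2^{−1/2}(1 + √((2^m−1)/(4^m−1)))·F_m(φ). Consequently F_m(φ) ≤ F_0(φ) for m = 1, 2, 3. -/
import Mathlib


open scoped BigOperators ComplexConjugate Matrix

/-- The single-qubit Pauli matrices `I, X, Y, Z`, indexed by `Fin 4`. -/
noncomputable def pauli1 : Fin 4 → Matrix Bool Bool ℂ := fun k =>
  if k = 0 then Matrix.of fun b c => if b = c then 1 else 0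
  else if k = 1 then Matrix.of fun b c => if b = c then 0 else 1
  else if k = 2 then
    Matrix.of fun b c => if b = c then 0 else if b then Complex.I else -Complex.I
  else Matrix.of fun b c => if b = c then (if b then -1 else 1) else 0

/-- The `m`-qubit Pauli operator given by a word `w : Fin m → Fin 4`. -/
noncomputable def pauliOp {m : ℕ} (w : Fin m → Fin 4) :
    Matrix (Fin m → Bool) (Fin m → Bool) ℂ :=
  Matrix.of fun x y => ∏ i, pauli1 (w i) (x i) (y i)

/-- `U` is a Clifford unitary: it is unitary and conjugates every Pauli operator to a
Pauli operator up to a power of `i`. -/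
def IsClifford {n : ℕ} (U : Matrix (Fin n → Bool) (Fin n → Bool) ℂ) : Prop :=
  U ∈ Matrix.unitaryGroup (Fin n → Bool) ℂ ∧
    ∀ w : Fin n → Fin 4, ∃ (k : Fin 4) (w' : Fin n → Fin 4),
      U * pauliOp w * Uᴴ = Complex.I ^ (k : ℕ) • pauliOp w'

/-- `P` is a stabilizer projector of rank `2^m` on `n` qubits:
`P = U (I^{⊗m} ⊗ |0⟩⟨0|^{⊗(n−m)}) U⁻¹` for some Clifford unitary `U`. -/
def IsStabProj (n m : ℕ) (P : Matrix (Fin n → Bool) (Fin n → Bool) ℂ) : Prop :=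
  ∃ U, IsClifford U ∧
    P = U * (Matrix.of fun x y =>
        if x = y ∧ ∀ i : Fin n, m ≤ (i : ℕ) → x i = false then 1 else 0) * Uᴴ

/-- `F_m(φ) = 2^{−m/2} max_Π ⟨φ|Π|φ⟩` over rank-`2^m` stabilizer projectors. -/
noncomputable def Fm (n m : ℕ) (φ : (Fin n → Bool) → ℂ) : ℝ :=
  ((Real.sqrt 2) ^ m)⁻¹ *
    sSup { r : ℝ | ∃ P, IsStabProj n m P ∧
      r = (∑ x, ∑ y, conj (φ x) * P x y * φ y).re }

/-- Pauli letter multiplication table. -/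
def pm : Fin 4 → Fin 4 → Fin 4 :=
  ![![0,1,2,3], ![1,0,3,2], ![2,3,0,1], ![3,2,1,0]]

/-- phase exponent: pauli1 a * pauli1 b = I ^ (ph a b) • pauli1 (pm a b) -/
def ph : Fin 4 → Fin 4 → ℕ :=
  ![![0,0,0,0], ![0,0,1,3], ![0,3,0,1], ![0,1,3,0]]

/-- symplectic (commutation) indicator -/
def sg : Fin 4 → Fin 4 → ℕ :=
  ![![0,0,0,0], ![0,0,1,1], ![0,1,0,1], ![0,1,1,0]]

lemma pauli1_mul (a b : Fin 4) :
    pauli1 a * pauli1 b = Complex.I ^ ph a b • pauli1 (pm a b) := by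
  ext x y
  fin_cases a <;> fin_cases b <;> cases x <;> cases y <;>
    simp [pauli1, pm, ph, Matrix.mul_apply, Fintype.sum_bool, Matrix.vecHead,
      Matrix.vecTail, Function.comp] <;> norm_num [pow_succ, Complex.I_mul_I] <;> ring

lemma pauli1_conjT (a : Fin 4) : (pauli1 a)ᴴ = pauli1 a := by
  ext x y
  fin_cases a <;> cases x <;> cases y <;>
    simp [pauli1, Matrix.conjTranspose_apply]

lemma ph_swap (a b : Fin 4) :
    (Complex.I : ℂ) ^ ph a b = (-1 : ℂ) ^ sg a b * Complex.I ^ ph b a := by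
  fin_cases a <;> fin_cases b <;> norm_num [ph, sg, pow_succ, Complex.I_sq]

lemma pm_comm (a b : Fin 4) : pm a b = pm b a := by fin_cases a <;> fin_cases b <;> decide

lemma pm_self (a : Fin 4) : pm a a = 0 := by fin_cases a <;> decide
lemma ph_self (a : Fin 4) : ph a a = 0 := by fin_cases a <;> decide
lemma sg_zero_left (a : Fin 4) : sg 0 a = 0 := by fin_cases a <;> decide
lemma sg_zero_right (a : Fin 4) : sg a 0 = 0 := by fin_cases a <;> decide

lemma pauli1_sum_ortho (a b c d : Bool) :
    ∑ k : Fin 4, pauli1 k a b * conj (pauli1 k c d)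
      = if a = c ∧ b = d then 2 else 0 := by
  cases a <;> cases b <;> cases c <;> cases d <;>
    simp [pauli1, Fin.sum_univ_four] <;> ring

variable {n : ℕ}

lemma pauliOp_mul_entry (u v : Fin n → Fin 4) (x y : Fin n → Bool) :
    (pauliOp u * pauliOp v) x y = ∏ i, (pauli1 (u i) * pauli1 (v i)) (x i) (y i) := by
  rw [Matrix.mul_apply]
  have h : ∀ i : Fin n, (pauli1 (u i) * pauli1 (v i)) (x i) (y i)
      = ∑ b : Bool, pauli1 (u i) (x i) b * pauli1 (v i) b (y i) := fun i =>
    Matrix.mul_apply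
  simp only [h, Finset.prod_univ_sum, Fintype.piFinset_univ]
  apply Finset.sum_congr rfl
  intro z _
  simp [pauliOp, ← Finset.prod_mul_distrib]

lemma pauliOp_mul (u v : Fin n → Fin 4) :
    pauliOp u * pauliOp v
      = Complex.I ^ (∑ i, ph (u i) (v i)) • pauliOp (fun i => pm (u i) (v i)) := by
  ext x y
  rw [pauliOp_mul_entry]
  simp only [pauli1_mul, Matrix.smul_apply, smul_eq_mul]
  rw [Finset.prod_mul_distrib, Finset.prod_pow_eq_pow_sum]
  simp [pauliOp]

lemma pauliOp_conjT (w : Fin n → Fin 4) : (pauliOp w)ᴴ = pauliOp w := by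
  ext x y
  simp only [Matrix.conjTranspose_apply, pauliOp, Matrix.of_apply, star_prod]
  refine Finset.prod_congr rfl fun i _ => ?_
  have := congrArg (fun M => M (x i) (y i)) (pauli1_conjT (w i))
  simpa [Matrix.conjTranspose_apply] using this

lemma pauliOp_zero : pauliOp (fun _ : Fin n => (0 : Fin 4)) = 1 := by
  ext x y
  simp only [pauliOp, Matrix.of_apply, Matrix.one_apply]
  by_cases h : x = y
  · subst h; simp [pauli1]
  · obtain ⟨i, hi⟩ := Function.ne_iff.mp h
    exact (Finset.prod_eq_zero (Finset.mem_univ i) (by simp [pauli1, hi])).trans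
      (by simp [h])

lemma pauliOp_sq (w : Fin n → Fin 4) : pauliOp w * pauliOp w = 1 := by
  rw [pauliOp_mul]
  simp [ph_self, pm_self, pauliOp_zero]

lemma pauliOp_comm (u v : Fin n → Fin 4) :
    pauliOp u * pauliOp v
      = ((-1 : ℂ) ^ (∑ i, sg (u i) (v i))) • (pauliOp v * pauliOp u) := by
  rw [pauliOp_mul u v, pauliOp_mul v u]
  have h1 : (Complex.I ^ (∑ i, ph (u i) (v i)) : ℂ)
      = (-1 : ℂ) ^ (∑ i, sg (u i) (v i)) * Complex.I ^ (∑ i, ph (v i) (u i)) := by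
    rw [← Finset.prod_pow_eq_pow_sum, ← Finset.prod_pow_eq_pow_sum,
      ← Finset.prod_pow_eq_pow_sum, ← Finset.prod_mul_distrib]
    exact Finset.prod_congr rfl fun i _ => ph_swap (u i) (v i)
  have h2 : (fun i => pm (u i) (v i)) = fun i => pm (v i) (u i) := by
    funext i; exact pm_comm (u i) (v i)
  rw [h1, h2, mul_smul]

section V

lemma I_pow_mod4 (k : ℕ) : ∃ k' : Fin 4, (Complex.I : ℂ) ^ k = Complex.I ^ ((k' : Fin 4) : ℕ) := by
  refine ⟨⟨k % 4, Nat.mod_lt _ (by norm_num)⟩, ?_⟩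
  conv_lhs => rw [← Nat.div_add_mod k 4]
  rw [pow_add, pow_mul]
  norm_num [pow_succ, Complex.I_mul_I]

variable {n : ℕ}

/-- the √2-unitary (A + εB)/√2 -/
noncomputable def Vmat (p q : Fin n → Fin 4) (ε : ℂ) :
    Matrix (Fin n → Bool) (Fin n → Bool) ℂ :=
  ((Real.sqrt 2)⁻¹ : ℂ) • (pauliOp p + ε • pauliOp q)

variable (p q : Fin n → Fin 4) (ε : ℂ) (hε : ε = 1 ∨ ε = -1)
  (hpq : pauliOp p * pauliOp q = -(pauliOp q * pauliOp p))

include hε hpq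

lemma Vmat_expand :
    (pauliOp p + ε • pauliOp q) * (pauliOp p + ε • pauliOp q) = (2 : ℂ) • 1 := by
  have hε2 : ε * ε = 1 := by rcases hε with h | h <;> simp [h]
  rw [add_mul, mul_add, mul_add, Matrix.smul_mul, Matrix.mul_smul, Matrix.mul_smul,
    Matrix.smul_mul, smul_smul, hε2, pauliOp_sq, pauliOp_sq, hpq]
  match_scalars <;> ring

omit hε hpq in
lemma sqrt2_fact : ((Real.sqrt 2 : ℂ))⁻¹ * ((Real.sqrt 2 : ℂ))⁻¹ * 2 = 1 := by
  have h : (Real.sqrt 2 : ℂ) * (Real.sqrt 2 : ℂ) = 2 := by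
    norm_cast
    exact Real.mul_self_sqrt (by norm_num)
  rw [← mul_inv, h]
  norm_num

omit hpq in
lemma Vmat_herm : (Vmat p q ε)ᴴ = Vmat p q ε := by
  have hε' : conj ε = ε := by rcases hε with h | h <;> simp [h]
  simp [Vmat, Matrix.conjTranspose_smul, Matrix.conjTranspose_add, pauliOp_conjT, hε',
    Complex.conj_ofReal]

lemma Vmat_mul_self : Vmat p q ε * Vmat p q ε = 1 := by
  rw [Vmat, Matrix.smul_mul, Matrix.mul_smul, smul_smul, Vmat_expand p q ε hε hpq,
    smul_smul, sqrt2_fact, one_smul]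

lemma Vmat_unitary : Vmat p q ε ∈ Matrix.unitaryGroup (Fin n → Bool) ℂ := by
  rw [Matrix.mem_unitaryGroup_iff]
  rw [Matrix.star_eq_conjTranspose, Vmat_herm p q ε hε, Vmat_mul_self p q ε hε hpq]

/-- generic conjugation computation -/
lemma Vmat_gen (v : Fin n → Fin 4) (α β : ℂ)
    (hαv : pauliOp p * pauliOp v = α • (pauliOp v * pauliOp p))
    (hβv : pauliOp q * pauliOp v = β • (pauliOp v * pauliOp q)) :
    (pauliOp p + ε • pauliOp q) * pauliOp v * (pauliOp p + ε • pauliOp q)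
      = (α + β) • pauliOp v
        + (ε * (α - β)) • (pauliOp v * (pauliOp p * pauliOp q)) := by
  have hε2 : ε * ε = 1 := by rcases hε with h | h <;> simp [h]
  have hA : pauliOp p * pauliOp p = 1 := pauliOp_sq p
  have hB : pauliOp q * pauliOp q = 1 := pauliOp_sq q
  have hBA : pauliOp q * pauliOp p = -(pauliOp p * pauliOp q) := by
    rw [hpq, neg_neg]
  calc (pauliOp p + ε • pauliOp q) * pauliOp v * (pauliOp p + ε • pauliOp q)
      = (α • (pauliOp v * pauliOp p) + (ε * β) • (pauliOp v * pauliOp q))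
          * (pauliOp p + ε • pauliOp q) := by
        rw [add_mul, Matrix.smul_mul, hαv, hβv, smul_smul]
    _ = α • (pauliOp v * (pauliOp p * pauliOp p))
          + (α * ε) • (pauliOp v * (pauliOp p * pauliOp q))
          + ((ε * β) • (pauliOp v * (pauliOp q * pauliOp p))
          + (ε * β * ε) • (pauliOp v * (pauliOp q * pauliOp q))) := by
        simp only [add_mul, mul_add, Matrix.smul_mul, Matrix.mul_smul, smul_smul,
          mul_assoc]
        match_scalars <;> ring
    _ = _ := by
        simp only [hA, hB, hBA, mul_one, Matrix.mul_neg, smul_neg]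
        match_scalars
        · linear_combination β * hε2
        · ring

lemma Vmat_conj_p : Vmat p q ε * pauliOp p * Vmat p q ε = ε • pauliOp q := by
  have hAAB : pauliOp p * (pauliOp p * pauliOp q) = pauliOp q := by
    rw [← mul_assoc, pauliOp_sq, one_mul]
  have hgen := Vmat_gen p q ε hε hpq p 1 (-1)
    (by rw [one_smul]) (by rw [neg_one_smul, hpq, neg_neg])
  rw [Vmat, Matrix.smul_mul, Matrix.smul_mul, Matrix.mul_smul, smul_smul, hgen, hAAB]
  match_scalars
  · ring
  · linear_combination ε * sqrt2_fact

omit hε hpq in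
lemma triple_prod (j : ℕ) (u₁ u₂ u₃ : Fin n → Fin 4) :
    ∃ (k : ℕ) (w' : Fin n → Fin 4),
      Complex.I ^ j • (pauliOp u₁ * (pauliOp u₂ * pauliOp u₃))
        = Complex.I ^ k • pauliOp w' := by
  rw [pauliOp_mul u₂ u₃, Matrix.mul_smul, pauliOp_mul u₁, smul_smul, smul_smul, ← pow_add,
    ← pow_add]
  exact ⟨_, _, rfl⟩

lemma Vmat_conj_pauli (v : Fin n → Fin 4) :
    ∃ (k : ℕ) (w' : Fin n → Fin 4),
      Vmat p q ε * pauliOp v * Vmat p q ε = Complex.I ^ k • pauliOp w' := by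
  rcases Nat.even_or_odd (∑ i, sg (p i) (v i)) with hpe | hpe <;>
    rcases Nat.even_or_odd (∑ i, sg (q i) (v i)) with hqe | hqe
  · -- α = 1, β = 1
    have hgen := Vmat_gen p q ε hε hpq v 1 1
      (by rw [pauliOp_comm p v, hpe.neg_one_pow]) (by rw [pauliOp_comm q v, hqe.neg_one_pow])
    refine ⟨0, v, ?_⟩
    rw [Vmat, Matrix.smul_mul, Matrix.smul_mul, Matrix.mul_smul, smul_smul, hgen]
    match_scalars
    · linear_combination sqrt2_fact
    · ring
  · -- α = 1, β = -1
    have hgen := Vmat_gen p q ε hε hpq v 1 (-1)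
      (by rw [pauliOp_comm p v, hpe.neg_one_pow]) (by rw [pauliOp_comm q v, hqe.neg_one_pow])
    have hmain : Vmat p q ε * pauliOp v * Vmat p q ε
        = ε • (pauliOp v * (pauliOp p * pauliOp q)) := by
      rw [Vmat, Matrix.smul_mul, Matrix.smul_mul, Matrix.mul_smul, smul_smul, hgen]
      match_scalars
      · ring
      · linear_combination ε * sqrt2_fact
    rcases hε with h | h
    · obtain ⟨k, w', hk⟩ := triple_prod (0 : ℕ) v p q
      exact ⟨k, w', by rw [hmain, h, ← hk, pow_zero]⟩
    · obtain ⟨k, w', hk⟩ := triple_prod (2 : ℕ) v p q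
      refine ⟨k, w', ?_⟩
      rw [hmain, h, ← hk]
      match_scalars
      linear_combination -Complex.I_sq
  · -- α = -1, β = 1
    have hgen := Vmat_gen p q ε hε hpq v (-1) 1
      (by rw [pauliOp_comm p v, hpe.neg_one_pow]) (by rw [pauliOp_comm q v, hqe.neg_one_pow])
    have hmain : Vmat p q ε * pauliOp v * Vmat p q ε
        = (-ε) • (pauliOp v * (pauliOp p * pauliOp q)) := by
      rw [Vmat, Matrix.smul_mul, Matrix.smul_mul, Matrix.mul_smul, smul_smul, hgen]
      match_scalars
      · ring
      · linear_combination (-ε) * sqrt2_fact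
    rcases hε with h | h
    · obtain ⟨k, w', hk⟩ := triple_prod (2 : ℕ) v p q
      refine ⟨k, w', ?_⟩
      rw [hmain, h, ← hk]
      match_scalars
      linear_combination -Complex.I_sq
    · obtain ⟨k, w', hk⟩ := triple_prod (0 : ℕ) v p q
      refine ⟨k, w', ?_⟩
      rw [hmain, h, ← hk]
      match_scalars
      ring
  · -- α = -1, β = -1
    have hgen := Vmat_gen p q ε hε hpq v (-1) (-1)
      (by rw [pauliOp_comm p v, hpe.neg_one_pow]) (by rw [pauliOp_comm q v, hqe.neg_one_pow])
    refine ⟨2, v, ?_⟩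
    rw [Vmat, Matrix.smul_mul, Matrix.smul_mul, Matrix.mul_smul, smul_smul, hgen]
    match_scalars
    · linear_combination -sqrt2_fact - Complex.I_sq
    · ring

lemma Vmat_clifford : IsClifford (Vmat p q ε) := by
  refine ⟨Vmat_unitary p q ε hε hpq, fun w => ?_⟩
  obtain ⟨k, w', hk⟩ := Vmat_conj_pauli p q ε hε hpq w
  obtain ⟨k', hk'⟩ := I_pow_mod4 k
  exact ⟨k', w', by rw [Vmat_herm p q ε hε, hk, hk']⟩

end V

section Cliff

variable {n : ℕ}

lemma isClifford_one : IsClifford (1 : Matrix (Fin n → Bool) (Fin n → Bool) ℂ) :=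
  ⟨by simp [Matrix.mem_unitaryGroup_iff], fun w =>
    ⟨0, w, by simp [Matrix.conjTranspose_one]⟩⟩

lemma isClifford_mul {U V : Matrix (Fin n → Bool) (Fin n → Bool) ℂ}
    (hU : IsClifford U) (hV : IsClifford V) : IsClifford (U * V) := by
  refine ⟨mul_mem hU.1 hV.1, fun w => ?_⟩
  obtain ⟨k, w', h⟩ := hV.2 w
  obtain ⟨k2, w'', h2⟩ := hU.2 w'
  obtain ⟨k3, h3⟩ := I_pow_mod4 ((k : ℕ) + (k2 : ℕ))
  refine ⟨k3, w'', ?_⟩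
  have e1 : (U * V) * pauliOp w * (U * V)ᴴ = U * (V * pauliOp w * Vᴴ) * Uᴴ := by
    rw [Matrix.conjTranspose_mul]
    noncomm_ring
  rw [e1, h, Matrix.mul_smul, Matrix.smul_mul, h2, smul_smul, ← pow_add, h3]

noncomputable def Dmat (n m : ℕ) : Matrix (Fin n → Bool) (Fin n → Bool) ℂ :=
  Matrix.of fun x y =>
    if x = y ∧ ∀ i : Fin n, m ≤ (i : ℕ) → x i = false then 1 else 0

lemma mul_Dmat_apply (m : ℕ) (M : Matrix (Fin n → Bool) (Fin n → Bool) ℂ)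
    (x y : Fin n → Bool) : (M * Dmat n m) x y = M x y * Dmat n m y y := by
  rw [Matrix.mul_apply,
    Finset.sum_eq_single_of_mem y (Finset.mem_univ y) (fun z _ hz => by simp [Dmat, hz])]

lemma Dmat_mul_apply (m : ℕ) (M : Matrix (Fin n → Bool) (Fin n → Bool) ℂ)
    (x y : Fin n → Bool) : (Dmat n m * M) x y = Dmat n m x x * M x y := by
  rw [Matrix.mul_apply,
    Finset.sum_eq_single_of_mem x (Finset.mem_univ x)
      (fun z _ hz => by simp [Dmat, Ne.symm hz])]

lemma Dmat_diag (m : ℕ) (x : Fin n → Bool) :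
    Dmat n m x x = if ∀ i : Fin n, m ≤ (i : ℕ) → x i = false then 1 else 0 := by
  simp [Dmat]

lemma Dmat_sq (m : ℕ) : Dmat n m * Dmat n m = Dmat n m := by
  ext x y
  rw [mul_Dmat_apply]
  by_cases h : x = y
  · subst h
    rw [Dmat_diag]
    split <;> simp [Dmat, *]
  · have h0 : Dmat n m x y = 0 := by simp [Dmat, h]
    rw [h0, zero_mul]

lemma Dmat_herm (m : ℕ) : (Dmat n m)ᴴ = Dmat n m := by
  ext x y
  by_cases h : x = y
  · subst h; simp [Dmat, Matrix.conjTranspose_apply]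
  · have h1 : Dmat n m y x = 0 := by simp [Dmat, Ne.symm h]
    have h2 : Dmat n m x y = 0 := by simp [Dmat, h]
    simp [Matrix.conjTranspose_apply, h1, h2]

lemma pauliOp_support {u : Fin n → Fin 4} {x y : Fin n → Bool}
    (h : pauliOp u x y ≠ 0) {i : Fin n} (hu : u i = 0) : x i = y i := by
  by_contra hxy
  exact h (Finset.prod_eq_zero (Finset.mem_univ i) (by simp [pauli1, hu, hxy]))

lemma pauliOp_commute_Dmat {m : ℕ} {u : Fin n → Fin 4}
    (hu : ∀ i : Fin n, m ≤ (i : ℕ) → u i = 0) :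
    pauliOp u * Dmat n m = Dmat n m * pauliOp u := by
  ext x y
  rw [mul_Dmat_apply, Dmat_mul_apply]
  by_cases h : pauliOp u x y = 0
  · rw [h, zero_mul, mul_zero]
  · have hxy : ∀ i : Fin n, m ≤ (i : ℕ) → x i = y i := fun i hi =>
      pauliOp_support h (hu i hi)
    simp only [Dmat_diag]
    have hiff : (∀ i : Fin n, m ≤ (i : ℕ) → x i = false)
        ↔ (∀ i : Fin n, m ≤ (i : ℕ) → y i = false) := by
      constructor <;> intro hc i hi
      · rw [← hxy i hi]; exact hc i hi
      · rw [hxy i hi]; exact hc i hi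
    by_cases hy : ∀ i : Fin n, m ≤ (i : ℕ) → y i = false
    · rw [if_pos hy, if_pos (hiff.mpr hy), one_mul, mul_one]
    · rw [if_neg hy, if_neg (fun hc => hy (hiff.mp hc)), zero_mul, mul_zero]

end Cliff

section Step

variable {n : ℕ}

/-- the word with `Z` at position `i₀` -/
def awd (i₀ : Fin n) : Fin n → Fin 4 := fun i => if i = i₀ then 3 else 0

/-- anticommuting partner of a Pauli letter -/
def partner : Fin 4 → Fin 4 := ![1, 3, 3, 1]

lemma partner_sg (k : Fin 4) (h : k ≠ 0) : sg (partner k) k = 1 := by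
  fin_cases k
  · exact absurd rfl h
  all_goals decide

lemma pauliOp_awd_apply (i₀ : Fin n) (x y : Fin n → Bool) :
    pauliOp (awd i₀) x y = if x = y then (if x i₀ then -1 else 1) else 0 := by
  by_cases h : x = y
  · subst h
    rw [if_pos rfl]
    show (∏ i, pauli1 (awd i₀ i) (x i) (x i)) = _
    rw [← Finset.mul_prod_erase _ _ (Finset.mem_univ i₀),
      Finset.prod_congr rfl (fun i hi => show pauli1 (awd i₀ i) (x i) (x i) = 1 by
        simp [awd, (Finset.mem_erase.mp hi).1, pauli1])]
    simp [awd, pauli1]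
  · obtain ⟨i, hi⟩ := Function.ne_iff.mp h
    rw [if_neg h]
    refine Finset.prod_eq_zero (Finset.mem_univ i) ?_
    by_cases hii : i = i₀
    · subst hii; simp [awd, pauli1, hi]
    · simp [awd, hii, pauli1, hi]

lemma Dmat_split {m : ℕ} (hm : 1 ≤ m) (hmn : m ≤ n) (i₀ : Fin n)
    (hi₀ : (i₀ : ℕ) = m - 1) :
    Dmat n (m - 1) = (2 : ℂ)⁻¹ • ((1 + pauliOp (awd i₀)) * Dmat n m) := by
  ext x y
  rw [Matrix.smul_apply, Matrix.add_mul, Matrix.one_mul, Matrix.add_apply, mul_Dmat_apply,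
    pauliOp_awd_apply]
  by_cases h : x = y
  · subst h
    rw [if_pos rfl]
    have hiff : (∀ i : Fin n, m - 1 ≤ (i : ℕ) → x i = false)
        ↔ (x i₀ = false ∧ ∀ i : Fin n, m ≤ (i : ℕ) → x i = false) := by
      constructor
      · intro hc
        exact ⟨hc i₀ (le_of_eq hi₀.symm),
          fun i hi => hc i (le_trans (Nat.sub_le m 1) hi)⟩
      · rintro ⟨h1, h2⟩ i hi
        rcases Nat.lt_or_ge (i : ℕ) m with hlt | hge
        · have : (i : ℕ) = m - 1 := le_antisymm (Nat.le_sub_one_of_lt hlt) hi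
          have : i = i₀ := Fin.ext (by rw [this, hi₀])
          rw [this]; exact h1
        · exact h2 i hge
    show Dmat n (m-1) x x = _
    rw [Dmat_diag, Dmat_diag]
    by_cases hx : x i₀
    · rw [if_neg (fun hc => by simpa [hx] using (hiff.mp hc).1), if_pos hx]
      split <;> norm_num
    · rw [if_neg hx]
      simp only [Bool.not_eq_true] at hx
      by_cases hc : ∀ i : Fin n, m ≤ (i : ℕ) → x i = false
      · rw [if_pos (hiff.mpr ⟨hx, hc⟩), if_pos hc]; norm_num
      · rw [if_neg (fun hh => hc (hiff.mp hh).2), if_neg hc]; norm_num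
  · have h1 : Dmat n (m-1) x y = 0 := by simp [Dmat, h]
    have h2 : Dmat n m x y = 0 := by simp [Dmat, h]
    rw [h1, h2, if_neg h]
    norm_num

lemma pauliOp_anticomm {u v : Fin n → Fin 4} (h : Odd (∑ i, sg (u i) (v i))) :
    pauliOp u * pauliOp v = -(pauliOp v * pauliOp u) := by
  rw [pauliOp_comm u v, h.neg_one_pow, neg_one_smul]

lemma Vmat_commute_Dmat {m : ℕ} {p q : Fin n → Fin 4} (ε : ℂ)
    (hp : ∀ i : Fin n, m ≤ (i : ℕ) → p i = 0) (hq : ∀ i : Fin n, m ≤ (i : ℕ) → q i = 0) :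
    Vmat p q ε * Dmat n m = Dmat n m * Vmat p q ε := by
  rw [Vmat, Matrix.smul_mul, Matrix.mul_smul, add_mul, mul_add, Matrix.smul_mul,
    Matrix.mul_smul, pauliOp_commute_Dmat hp, pauliOp_commute_Dmat hq]

lemma stab_step_core {m : ℕ} (hm : 1 ≤ m) (hmn : m ≤ n) (i₀ : Fin n)
    (hi₀ : (i₀ : ℕ) = m - 1)
    (b : Fin n → Fin 4) (hbs : ∀ i : Fin n, m ≤ (i : ℕ) → b i = 0)
    (s : ℂ) (hs : s = 1 ∨ s = -1) (c : Fin n → Fin 4)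
    (hcs : ∀ i : Fin n, m ≤ (i : ℕ) → c i = 0)
    (hac : Odd (∑ i, sg (awd i₀ i) (c i)))
    (hcb : Odd (∑ i, sg (c i) (b i))) :
    ∃ W : Matrix (Fin n → Bool) (Fin n → Bool) ℂ, IsClifford W ∧
      W * Dmat n (m - 1) * Wᴴ = (2 : ℂ)⁻¹ • ((1 + s • pauliOp b) * Dmat n m) := by
  have has : ∀ i : Fin n, m ≤ (i : ℕ) → awd i₀ i = 0 := by
    intro i hi
    have : i ≠ i₀ := fun h => by
      rw [h, hi₀] at hi
      omega
    simp [awd, this]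
  have hACanti := pauliOp_anticomm hac
  have hCBanti := pauliOp_anticomm hcb
  set V1 := Vmat (awd i₀) c 1 with hV1
  set V2 := Vmat c b s with hV2
  set W := V2 * V1 with hW
  have hWcliff : IsClifford W :=
    isClifford_mul (Vmat_clifford c b s hs hCBanti)
      (Vmat_clifford (awd i₀) c 1 (Or.inl rfl) hACanti)
  refine ⟨W, hWcliff, ?_⟩
  have hWherm : Wᴴ = V1 * V2 := by
    rw [hW, Matrix.conjTranspose_mul, hV1, hV2, Vmat_herm (awd i₀) c 1 (Or.inl rfl),
      Vmat_herm c b s hs]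
  have hWW : W * Wᴴ = 1 := by
    rw [hWherm, hW]
    calc V2 * V1 * (V1 * V2) = V2 * (V1 * V1) * V2 := by noncomm_ring
      _ = 1 := by
        rw [hV1, Vmat_mul_self (awd i₀) c 1 (Or.inl rfl) hACanti, mul_one, hV2,
          Vmat_mul_self c b s hs hCBanti]
  have hWA : W * pauliOp (awd i₀) * Wᴴ = s • pauliOp b := by
    rw [hWherm, hW]
    calc V2 * V1 * pauliOp (awd i₀) * (V1 * V2)
        = V2 * (V1 * pauliOp (awd i₀) * V1) * V2 := by noncomm_ring
      _ = V2 * pauliOp c * V2 := by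
          rw [hV1, Vmat_conj_p (awd i₀) c 1 (Or.inl rfl) hACanti, one_smul]
      _ = s • pauliOp b := Vmat_conj_p c b s hs hCBanti
  have hWDm : Dmat n m * Wᴴ = Wᴴ * Dmat n m := by
    rw [hWherm]
    calc Dmat n m * (V1 * V2) = (Dmat n m * V1) * V2 := by rw [mul_assoc]
      _ = V1 * (Dmat n m * V2) := by rw [hV1, ← Vmat_commute_Dmat 1 has hcs, mul_assoc]
      _ = V1 * V2 * Dmat n m := by rw [hV2, ← Vmat_commute_Dmat s hcs hbs, mul_assoc]
  rw [Dmat_split hm hmn i₀ hi₀, Matrix.mul_smul, Matrix.smul_mul]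
  congr 1
  have e1 : W * ((1 + pauliOp (awd i₀)) * Dmat n m) * Wᴴ
      = W * (1 + pauliOp (awd i₀)) * (Dmat n m * Wᴴ) := by noncomm_ring
  have e2 : W * (1 + pauliOp (awd i₀)) * Wᴴ = 1 + s • pauliOp b := by
    rw [mul_add, mul_one, add_mul, hWW, hWA]
  rw [e1, hWDm, ← mul_assoc, e2]

lemma stab_step {m : ℕ} (hm : 1 ≤ m) (hmn : m ≤ n)
    (b : Fin n → Fin 4) (hb0 : b ≠ fun _ => 0)
    (hbs : ∀ i : Fin n, m ≤ (i : ℕ) → b i = 0)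
    (s : ℂ) (hs : s = 1 ∨ s = -1) :
    ∃ W : Matrix (Fin n → Bool) (Fin n → Bool) ℂ, IsClifford W ∧
      W * Dmat n (m - 1) * Wᴴ = (2 : ℂ)⁻¹ • ((1 + s • pauliOp b) * Dmat n m) := by
  have hi₀lt : m - 1 < n := lt_of_lt_of_le (Nat.sub_lt hm Nat.one_pos) hmn
  set i₀ : Fin n := ⟨m - 1, hi₀lt⟩ with hi₀def
  have hi₀ : (i₀ : ℕ) = m - 1 := rfl
  have hi₀m : (i₀ : ℕ) < m := Nat.sub_lt hm Nat.one_pos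
  by_cases hbi : b i₀ = 0
  · obtain ⟨j, hj⟩ := Function.ne_iff.mp hb0
    have hjm : (j : ℕ) < m := by
      by_contra hge
      exact hj (hbs j (le_of_not_gt hge))
    have hji : j ≠ i₀ := fun h => hj (by rw [h]; exact hbi)
    refine stab_step_core hm hmn i₀ hi₀ b hbs s hs
      (fun i => if i = i₀ then 1 else if i = j then partner (b j) else 0)
      (fun i hi => ?_) ?_ ?_
    · have h1 : i ≠ i₀ := fun h => by rw [h, hi₀] at hi; omega
      have h2 : i ≠ j := fun h => by rw [h] at hi; omega
      simp [h1, h2]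
    · rw [Finset.sum_eq_single i₀ (fun i _ hii => by simp [awd, hii, sg_zero_left])
        (fun h => absurd (Finset.mem_univ i₀) h)]
      simp [awd]
      decide
    · rw [Finset.sum_eq_single j (fun i _ hij => ?_)
        (fun h => absurd (Finset.mem_univ j) h)]
      · simp only [if_neg hji, if_pos rfl, if_true]
        rw [partner_sg (b j) hj]
        exact odd_one
      · by_cases hii : i = i₀
        · simp [hii, hbi, sg_zero_right]
        · simp [hii, hij, sg_zero_left]
  · refine stab_step_core hm hmn i₀ hi₀ b hbs s hs
      (fun i => if i = i₀ then (if b i₀ = 1 then 2 else 1) else 0)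
      (fun i hi => ?_) ?_ ?_
    · have h1 : i ≠ i₀ := fun h => by rw [h, hi₀] at hi; omega
      simp [h1]
    · rw [Finset.sum_eq_single i₀ (fun i _ hii => by simp [awd, hii, sg_zero_left])
        (fun h => absurd (Finset.mem_univ i₀) h)]
      simp only [awd, if_pos rfl, if_true]
      have key : ∀ k : Fin 4, sg 3 (if k = 1 then 2 else 1) = 1 := by decide
      rw [key (b i₀)]
      exact odd_one
    · rw [Finset.sum_eq_single i₀ (fun i _ hii => by simp [hii, sg_zero_left])
        (fun h => absurd (Finset.mem_univ i₀) h)]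
      simp only [if_pos rfl, if_true]
      have key : ∀ k : Fin 4, k ≠ 0 → sg (if k = 1 then 2 else 1) k = 1 := by decide
      rw [key (b i₀) hbi]
      exact odd_one

end Step

section Qf

variable {n : ℕ}

noncomputable def Qf (φ : (Fin n → Bool) → ℂ)
    (M : Matrix (Fin n → Bool) (Fin n → Bool) ℂ) : ℂ :=
  ∑ x, ∑ y, conj (φ x) * M x y * φ y

lemma Qf_eq_dot (φ : (Fin n → Bool) → ℂ) (M : Matrix (Fin n → Bool) (Fin n → Bool) ℂ) :
    Qf φ M = dotProduct (star φ) (M.mulVec φ) := by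
  unfold Qf
  simp only [dotProduct, Matrix.mulVec, Pi.star_apply, Complex.star_def,
    Finset.mul_sum, mul_assoc]

lemma Qf_conjU (φ : (Fin n → Bool) → ℂ) (U M : Matrix (Fin n → Bool) (Fin n → Bool) ℂ) :
    Qf φ (U * M * Uᴴ) = Qf (Uᴴ.mulVec φ) M := by
  rw [Qf_eq_dot, Qf_eq_dot]
  rw [← Matrix.mulVec_mulVec, ← Matrix.mulVec_mulVec, Matrix.dotProduct_mulVec]
  congr 1
  rw [Matrix.star_mulVec, Matrix.conjTranspose_conjTranspose]

lemma unitary_norm (φ : (Fin n → Bool) → ℂ) {U : Matrix (Fin n → Bool) (Fin n → Bool) ℂ}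
    (hU : U ∈ Matrix.unitaryGroup (Fin n → Bool) ℂ) :
    dotProduct (star (Uᴴ.mulVec φ)) (Uᴴ.mulVec φ) = dotProduct (star φ) φ := by
  rw [Matrix.star_mulVec, Matrix.conjTranspose_conjTranspose]
  rw [show (star φ) ᵥ* U ⬝ᵥ Uᴴ.mulVec φ = star φ ⬝ᵥ (U.mulVec (Uᴴ.mulVec φ)) from
    (Matrix.dotProduct_mulVec _ _ _).symm]
  rw [Matrix.mulVec_mulVec]
  rw [show U * Uᴴ = 1 from by
    rw [← Matrix.star_eq_conjTranspose]; exact Matrix.mem_unitaryGroup_iff.mp hU,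
    Matrix.one_mulVec]

lemma Qf_conj (ψ : (Fin n → Bool) → ℂ) (M : Matrix (Fin n → Bool) (Fin n → Bool) ℂ) :
    conj (Qf ψ M) = Qf ψ Mᴴ := by
  unfold Qf
  rw [map_sum, Finset.sum_comm]
  refine Finset.sum_congr rfl fun x _ => ?_
  rw [map_sum]
  refine Finset.sum_congr rfl fun y _ => ?_
  simp only [map_mul, Complex.conj_conj, Matrix.conjTranspose_apply, Complex.star_def]
  ring

lemma Qf_herm_real (ψ : (Fin n → Bool) → ℂ) {M : Matrix (Fin n → Bool) (Fin n → Bool) ℂ}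
    (hM : Mᴴ = M) : ((Qf ψ M).re : ℂ) = Qf ψ M := by
  have h := Qf_conj ψ M
  rw [hM] at h
  exact Complex.conj_eq_iff_re.mp h

lemma Qf_one (ψ : (Fin n → Bool) → ℂ) : Qf ψ 1 = ∑ a, conj (ψ a) * ψ a := by
  unfold Qf
  refine Finset.sum_congr rfl fun x _ => ?_
  rw [Finset.sum_eq_single_of_mem x (Finset.mem_univ x)
    (fun z _ hz => by simp [Matrix.one_apply, Ne.symm hz])]
  simp [Matrix.one_apply]

end Qf

section OrthoSum

variable {n m : ℕ}

def Sset (n m : ℕ) : Finset (Fin n → Fin 4) :=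
  Fintype.piFinset (fun i => if m ≤ (i : ℕ) then ({0} : Finset (Fin 4)) else Finset.univ)

lemma zero_mem_Sset : (fun _ => 0) ∈ Sset n m := by
  rw [Sset, Fintype.mem_piFinset]
  intro i
  by_cases h : m ≤ (i : ℕ) <;> simp [h]

lemma mem_Sset_supp {w : Fin n → Fin 4} (hw : w ∈ Sset n m) :
    ∀ i : Fin n, m ≤ (i : ℕ) → w i = 0 := by
  intro i hi
  have := Fintype.mem_piFinset.mp hw i
  rw [if_pos hi] at this
  simpa using this

lemma prod_tail_ite {M : Type*} [CommMonoid M] (x : M) (hmn : m ≤ n) :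
    (∏ i : Fin n, if m ≤ (i : ℕ) then 1 else x) = x ^ m := by
  rw [Fin.prod_univ_eq_prod_range (fun j => if m ≤ j then (1 : M) else x) n]
  rw [Finset.range_eq_Ico, ← Finset.prod_Ico_consecutive _ (Nat.zero_le m) hmn]
  have h1 : (∏ j ∈ Finset.Ico 0 m, if m ≤ j then (1 : M) else x) = x ^ m := by
    rw [Finset.prod_congr rfl
      (fun j hj => if_neg (not_le.mpr (Finset.mem_Ico.mp hj).2))]
    simp [Finset.prod_const, Nat.card_Ico]
  have h2 : (∏ j ∈ Finset.Ico m n, if m ≤ j then (1 : M) else x) = 1 := by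
    rw [Finset.prod_congr rfl (fun j hj => if_pos (Finset.mem_Ico.mp hj).1)]
    simp
  rw [h1, h2, mul_one]

lemma card_Sset (hmn : m ≤ n) : (Sset n m).card = 4 ^ m := by
  rw [Sset, Fintype.card_piFinset]
  have : ∀ i : Fin n,
      ((if m ≤ (i : ℕ) then ({0} : Finset (Fin 4)) else Finset.univ)).card
        = if m ≤ (i : ℕ) then 1 else 4 := by
    intro i
    by_cases h : m ≤ (i : ℕ) <;> simp [h]
  rw [Finset.prod_congr rfl (fun i _ => this i)]
  exact prod_tail_ite 4 hmn

lemma kernel_sum (hmn : m ≤ n) {a b c e : Fin n → Bool}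
    (ha : ∀ i : Fin n, m ≤ (i : ℕ) → a i = false)
    (hb : ∀ i : Fin n, m ≤ (i : ℕ) → b i = false)
    (hc : ∀ i : Fin n, m ≤ (i : ℕ) → c i = false)
    (hd : ∀ i : Fin n, m ≤ (i : ℕ) → e i = false) :
    ∑ w ∈ Sset n m, pauliOp w a b * conj (pauliOp w c e)
      = (2 ^ m : ℂ) * (if a = c ∧ b = e then 1 else 0) := by
  have hterm : ∀ w : Fin n → Fin 4, pauliOp w a b * conj (pauliOp w c e)
      = ∏ i, (pauli1 (w i) (a i) (b i) * conj (pauli1 (w i) (c i) (e i))) := by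
    intro w
    show (∏ i, pauli1 (w i) (a i) (b i)) * conj (∏ i, pauli1 (w i) (c i) (e i)) = _
    rw [map_prod, ← Finset.prod_mul_distrib]
  rw [Finset.sum_congr rfl (fun w _ => hterm w), Sset,
    ← Finset.prod_univ_sum
      (fun (i : Fin n) => if m ≤ (i : ℕ) then ({0} : Finset (Fin 4)) else Finset.univ)
      (fun (i : Fin n) (k : Fin 4) => pauli1 k (a i) (b i) * conj (pauli1 k (c i) (e i)))]
  have hslot : ∀ i : Fin n,
      (∑ k ∈ (if m ≤ (i : ℕ) then ({0} : Finset (Fin 4)) else Finset.univ),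
        pauli1 k (a i) (b i) * conj (pauli1 k (c i) (e i)))
      = if m ≤ (i : ℕ) then 1
          else (2 : ℂ) * (if a i = c i ∧ b i = e i then 1 else 0) := by
    intro i
    by_cases hi : m ≤ (i : ℕ)
    · rw [if_pos hi, if_pos hi, Finset.sum_singleton, ha i hi, hb i hi, hc i hi, hd i hi]
      simp [pauli1]
    · rw [if_neg hi, if_neg hi, pauli1_sum_ortho]
      by_cases h1 : a i = c i ∧ b i = e i <;> simp [h1]
  rw [Finset.prod_congr rfl (fun i _ => hslot i)]
  by_cases hab : a = c ∧ b = e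
  · rw [if_pos hab, mul_one]
    have heach : ∀ i : Fin n,
        (if m ≤ (i : ℕ) then (1 : ℂ)
          else 2 * (if a i = c i ∧ b i = e i then 1 else 0))
        = if m ≤ (i : ℕ) then 1 else 2 := by
      intro i
      have : a i = c i ∧ b i = e i := ⟨congrFun hab.1 i, congrFun hab.2 i⟩
      by_cases hi : m ≤ (i : ℕ) <;> simp [hi, this]
    rw [Finset.prod_congr rfl (fun i _ => heach i)]
    exact prod_tail_ite 2 hmn
  · rw [if_neg hab, mul_zero]
    have : ∃ i : Fin n, a i ≠ c i ∨ b i ≠ e i := by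
      by_contra hno
      push_neg at hno
      exact hab ⟨funext fun i => (hno i).1, funext fun i => (hno i).2⟩
    obtain ⟨i, hi⟩ := this
    have him : ¬ m ≤ (i : ℕ) := by
      intro hm
      rcases hi with h | h
      · exact h (by rw [ha i hm, hc i hm])
      · exact h (by rw [hb i hm, hd i hm])
    refine Finset.prod_eq_zero (Finset.mem_univ i) ?_
    rw [if_neg him, if_neg (by tauto), mul_zero]

lemma pauli_sum_sq (hmn : m ≤ n) (ψ : (Fin n → Bool) → ℂ)
    (hψ : ∀ a, ¬ (∀ i : Fin n, m ≤ (i : ℕ) → a i = false) → ψ a = 0) :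
    ∑ w ∈ Sset n m, (Qf ψ (pauliOp w) * conj (Qf ψ (pauliOp w)))
      = (2 ^ m : ℂ) * ((∑ a, conj (ψ a) * ψ a) * (∑ a, conj (ψ a) * ψ a)) := by
  classical
  have hsupp : ∀ {x : Fin n → Bool}, ψ x ≠ 0 → ∀ i : Fin n, m ≤ (i : ℕ) → x i = false := by
    intro x hx i hi
    by_contra hxx
    exact hx (hψ x (fun hall => hxx (hall i hi)))
  set X := (Fin n → Bool) × (Fin n → Bool) with hX
  set C : X → X → ℂ :=
    fun p q => conj (ψ p.1) * ψ p.2 * (ψ q.1 * conj (ψ q.2)) with hC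
  have hQ : ∀ M : Matrix (Fin n → Bool) (Fin n → Bool) ℂ,
      Qf ψ M = ∑ p : X, conj (ψ p.1) * M p.1 p.2 * ψ p.2 := by
    intro M
    exact (Fintype.sum_prod_type
      (f := fun p : X => conj (ψ p.1) * M p.1 p.2 * ψ p.2)).symm
  have step1 : ∀ w : Fin n → Fin 4, Qf ψ (pauliOp w) * conj (Qf ψ (pauliOp w))
      = ∑ p : X, ∑ q : X, C p q * (pauliOp w p.1 p.2 * conj (pauliOp w q.1 q.2)) := by
    intro w
    rw [hQ, map_sum, Finset.sum_mul_sum]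
    refine Finset.sum_congr rfl fun p _ => Finset.sum_congr rfl fun q _ => ?_
    simp only [map_mul, Complex.conj_conj, hC]
    ring
  rw [Finset.sum_congr rfl (fun w _ => step1 w)]
  rw [Finset.sum_comm]
  have step2 : ∀ p : X,
      (∑ q : X, ∑ w ∈ Sset n m, C p q * (pauliOp w p.1 p.2 * conj (pauliOp w q.1 q.2)))
      = ∑ q : X, C p q * ((2 ^ m : ℂ) * (if p.1 = q.1 ∧ p.2 = q.2 then 1 else 0)) := by
    intro p
    refine Finset.sum_congr rfl fun q _ => ?_
    rw [← Finset.mul_sum]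
    by_cases h0 : C p q = 0
    · rw [h0, zero_mul, zero_mul]
    · congr 1
      have h1 : ψ p.1 ≠ 0 := fun h => h0 (by simp [hC, h])
      have h2 : ψ p.2 ≠ 0 := fun h => h0 (by simp [hC, h])
      have h3 : ψ q.1 ≠ 0 := fun h => h0 (by simp [hC, h])
      have h4 : ψ q.2 ≠ 0 := fun h => h0 (by simp [hC, h])
      exact kernel_sum hmn (hsupp h1) (hsupp h2) (hsupp h3) (hsupp h4)
  rw [Finset.sum_congr rfl (fun p _ => Finset.sum_comm.trans (step2 p))]
  have step3 : ∀ p : X,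
      (∑ q : X, C p q * ((2 ^ m : ℂ) * (if p.1 = q.1 ∧ p.2 = q.2 then 1 else 0)))
      = (2 ^ m : ℂ) * C p p := by
    intro p
    rw [Finset.sum_eq_single_of_mem p (Finset.mem_univ p)
      (fun q _ hq => by
        rw [if_neg (fun hh : p.1 = q.1 ∧ p.2 = q.2 => hq (Prod.ext hh.1 hh.2).symm),
          mul_zero, mul_zero])]
    rw [if_pos ⟨rfl, rfl⟩, mul_one]
    ring
  rw [Finset.sum_congr rfl (fun p _ => step3 p), ← Finset.mul_sum]
  congr 1
  rw [show (∑ p : X, C p p)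
      = ∑ x : Fin n → Bool, ∑ y : Fin n → Bool,
        (conj (ψ x) * ψ x) * (conj (ψ y) * ψ y) from by
    rw [Fintype.sum_prod_type (f := fun p : X => C p p)]
    exact Finset.sum_congr rfl fun x _ => Finset.sum_congr rfl fun y _ => by
      simp only [hC]; ring]
  rw [← Finset.sum_mul_sum]

end OrthoSum

section Value

variable {n m : ℕ}

lemma isStabProj_iff (P : Matrix (Fin n → Bool) (Fin n → Bool) ℂ) :
    IsStabProj n m P ↔ ∃ U, IsClifford U ∧ P = U * Dmat n m * Uᴴ := Iff.rfl

lemma Qf_add (ψ : (Fin n → Bool) → ℂ) (M N : Matrix (Fin n → Bool) (Fin n → Bool) ℂ) :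
    Qf ψ (M + N) = Qf ψ M + Qf ψ N := by
  unfold Qf
  rw [← Finset.sum_add_distrib]
  refine Finset.sum_congr rfl fun x _ => ?_
  rw [← Finset.sum_add_distrib]
  refine Finset.sum_congr rfl fun y _ => ?_
  simp [Matrix.add_apply]
  ring

lemma Qf_smul (c : ℂ) (ψ : (Fin n → Bool) → ℂ)
    (M : Matrix (Fin n → Bool) (Fin n → Bool) ℂ) : Qf ψ (c • M) = c * Qf ψ M := by
  unfold Qf
  rw [Finset.mul_sum]
  refine Finset.sum_congr rfl fun x _ => ?_
  rw [Finset.mul_sum]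
  refine Finset.sum_congr rfl fun y _ => ?_
  simp [Matrix.smul_apply]
  ring

/-- restriction of a vector to the tail-false support -/
noncomputable def restr (n m : ℕ) (χ : (Fin n → Bool) → ℂ) : (Fin n → Bool) → ℂ :=
  fun a => if ∀ i : Fin n, m ≤ (i : ℕ) → a i = false then χ a else 0

lemma restr_supp (χ : (Fin n → Bool) → ℂ) :
    ∀ a, ¬ (∀ i : Fin n, m ≤ (i : ℕ) → a i = false) → restr n m χ a = 0 := by
  intro a ha
  rw [restr, if_neg ha]

lemma Qf_Dmat (χ : (Fin n → Bool) → ℂ) :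
    Qf χ (Dmat n m) = ∑ a, conj (restr n m χ a) * restr n m χ a := by
  unfold Qf
  refine Finset.sum_congr rfl fun a _ => ?_
  rw [Finset.sum_eq_single_of_mem a (Finset.mem_univ a)
    (fun b _ hb => by simp [Dmat, Ne.symm hb])]
  rw [show Dmat n m a a = if ∀ i : Fin n, m ≤ (i : ℕ) → a i = false then 1 else 0 from
    Dmat_diag m a]
  unfold restr
  by_cases hc : ∀ i : Fin n, m ≤ (i : ℕ) → a i = false
  · rw [if_pos hc, if_pos hc]
    ring
  · rw [if_neg hc, if_neg hc]
    simp

lemma Qf_pauli_Dmat (χ : (Fin n → Bool) → ℂ) {w : Fin n → Fin 4}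
    (hw : ∀ i : Fin n, m ≤ (i : ℕ) → w i = 0) :
    Qf χ (pauliOp w * Dmat n m) = Qf (restr n m χ) (pauliOp w) := by
  unfold Qf
  refine Finset.sum_congr rfl fun a _ => Finset.sum_congr rfl fun b _ => ?_
  rw [mul_Dmat_apply, Dmat_diag]
  by_cases hP : pauliOp w a b = 0
  · rw [hP]
    simp
  · have hab : ∀ i : Fin n, m ≤ (i : ℕ) → a i = b i := fun i hi =>
      pauliOp_support hP (hw i hi)
    unfold restr
    by_cases hcb : ∀ i : Fin n, m ≤ (i : ℕ) → b i = false
    · have hca : ∀ i : Fin n, m ≤ (i : ℕ) → a i = false := fun i hi =>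
        (hab i hi).trans (hcb i hi)
      rw [if_pos hcb, if_pos hcb, if_pos hca]
      ring
    · have hca : ¬ ∀ i : Fin n, m ≤ (i : ℕ) → a i = false := fun h =>
        hcb (fun i hi => (hab i hi).symm.trans (h i hi))
      rw [if_neg hcb, if_neg hcb, if_neg hca]
      simp

lemma sum_conj_self (ψ : (Fin n → Bool) → ℂ) :
    (∑ a, conj (ψ a) * ψ a) = ((∑ a, Complex.normSq (ψ a) : ℝ) : ℂ) := by
  push_cast
  refine Finset.sum_congr rfl fun a _ => ?_
  rw [Complex.normSq_eq_conj_mul_self]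

end Value

lemma main_step {n m : ℕ} (hm : 1 ≤ m) (hmn : m ≤ n) (φ : (Fin n → Bool) → ℂ)
    {P : Matrix (Fin n → Bool) (Fin n → Bool) ℂ} (hP : IsStabProj n m P) :
    ∃ P', IsStabProj n (m - 1) P' ∧
      (1 + Real.sqrt (((2:ℝ) ^ m - 1) / ((4:ℝ) ^ m - 1))) / 2 * (Qf φ P).re
        ≤ (Qf φ P').re := by
  obtain ⟨U, hU, hPe⟩ := hP
  have hPe' : P = U * Dmat n m * Uᴴ := hPe
  set χ := Uᴴ.mulVec φ with hχ
  set ψ := restr n m χ with hψdef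
  set NR : ℝ := ∑ a, Complex.normSq (ψ a) with hNR
  have hNRnn : 0 ≤ NR := Finset.sum_nonneg fun a _ => Complex.normSq_nonneg _
  have hQD : Qf χ (Dmat n m) = (NR : ℂ) := by
    rw [Qf_Dmat, ← hψdef, sum_conj_self, hNR]
  have hval : Qf φ P = (NR : ℂ) := by rw [hPe', Qf_conjU, ← hχ, hQD]
  have hreal : ∀ w : Fin n → Fin 4,
      Qf ψ (pauliOp w) = (((Qf ψ (pauliOp w)).re : ℝ) : ℂ) :=
    fun w => (Qf_herm_real ψ (pauliOp_conjT w)).symm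
  set ρ : (Fin n → Fin 4) → ℝ := fun w => (Qf ψ (pauliOp w)).re with hρ
  have hsq : ∑ w ∈ Sset n m, (ρ w : ℝ) ^ 2 = 2 ^ m * NR ^ 2 := by
    have hC := pauli_sum_sq hmn ψ (restr_supp χ)
    rw [sum_conj_self ψ, ← hNR] at hC
    have hterm : ∀ w : Fin n → Fin 4, Qf ψ (pauliOp w) * conj (Qf ψ (pauliOp w))
        = ((ρ w ^ 2 : ℝ) : ℂ) := by
      intro w
      rw [hreal w, Complex.conj_ofReal]
      push_cast
      ring
    rw [Finset.sum_congr rfl (fun w _ => hterm w)] at hC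
    have h2 : (∑ w ∈ Sset n m, ρ w ^ 2) = 2 ^ m * (NR * NR) := by exact_mod_cast hC
    rw [h2]
    ring
  have hρ0 : ρ (fun _ => 0) = NR := by
    show (Qf ψ (pauliOp fun _ => 0)).re = NR
    rw [pauliOp_zero, Qf_one, sum_conj_self, ← hNR, Complex.ofReal_re]
  set S' := (Sset n m).erase (fun _ => (0 : Fin 4)) with hS'
  have hsum_er : ρ (fun _ => 0) ^ 2 + ∑ x ∈ S', ρ x ^ 2 = ∑ w ∈ Sset n m, ρ w ^ 2 := by
    simpa using Finset.add_sum_erase (Sset n m) (fun w => ρ w ^ 2) zero_mem_Sset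
  have hsq' : ∑ w ∈ S', ρ w ^ 2 = (2 ^ m - 1) * NR ^ 2 := by
    rw [hsq, hρ0] at hsum_er
    nlinarith [hsum_er]
  have hcard : S'.card = 4 ^ m - 1 := by
    rw [hS', Finset.card_erase_of_mem zero_mem_Sset, card_Sset hmn]
  have h4le : 4 ≤ 4 ^ m := by
    calc 4 = 4 ^ 1 := (pow_one 4).symm
    _ ≤ 4 ^ m := Nat.pow_le_pow_right (by norm_num) hm
  have hne : S'.Nonempty := Finset.card_pos.mp (by rw [hcard]; omega)
  have h4m1 : (0 : ℝ) < (4 : ℝ) ^ m - 1 := by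
    have : ((4 : ℕ) : ℝ) ≤ ((4 ^ m : ℕ) : ℝ) := Nat.cast_le.mpr h4le
    push_cast at this
    linarith
  have h2m1 : (0 : ℝ) ≤ (2 : ℝ) ^ m - 1 := by
    have h1 : (1 : ℕ) ≤ 2 ^ m := Nat.one_le_two_pow
    have : ((1 : ℕ) : ℝ) ≤ ((2 ^ m : ℕ) : ℝ) := Nat.cast_le.mpr h1
    push_cast at this
    linarith
  set t := Real.sqrt (((2:ℝ) ^ m - 1) / ((4:ℝ) ^ m - 1)) with ht
  have htsq : t ^ 2 = ((2:ℝ) ^ m - 1) / ((4:ℝ) ^ m - 1) :=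
    Real.sq_sqrt (by positivity)
  have htnn : 0 ≤ t := Real.sqrt_nonneg _
  obtain ⟨w, hwS', hwge⟩ :
      ∃ w ∈ S', ((2:ℝ) ^ m - 1) / ((4:ℝ) ^ m - 1) * NR ^ 2 ≤ ρ w ^ 2 := by
    by_contra hno
    push_neg at hno
    have hlt : ∑ w ∈ S', ρ w ^ 2
        < ∑ _w ∈ S', ((2:ℝ) ^ m - 1) / ((4:ℝ) ^ m - 1) * NR ^ 2 :=
      Finset.sum_lt_sum_of_nonempty hne hno
    rw [Finset.sum_const, hcard, nsmul_eq_mul] at hlt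
    have hcast : ((4 ^ m - 1 : ℕ) : ℝ) = (4:ℝ) ^ m - 1 := by
      push_cast [Nat.cast_sub (by omega : 1 ≤ 4 ^ m)]
      ring
    rw [hcast, hsq'] at hlt
    have heq : ((4:ℝ) ^ m - 1) * (((2:ℝ) ^ m - 1) / ((4:ℝ) ^ m - 1) * NR ^ 2)
        = ((2:ℝ) ^ m - 1) * NR ^ 2 := by
      field_simp
    rw [heq] at hlt
    exact lt_irrefl _ hlt
  have hwS := Finset.mem_of_mem_erase hwS'
  have hw0 : w ≠ fun _ => 0 := Finset.ne_of_mem_erase hwS'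
  have hwsupp := mem_Sset_supp hwS
  have habs : t * NR ≤ |ρ w| := by
    have h1 : (t * NR) ^ 2 ≤ ρ w ^ 2 := by
      rw [mul_pow, htsq]
      exact hwge
    have h2 := Real.sqrt_le_sqrt h1
    rwa [Real.sqrt_sq (by positivity), Real.sqrt_sq_eq_abs] at h2
  set sr : ℝ := if 0 ≤ ρ w then 1 else -1 with hsr
  have hsρ : sr * ρ w = |ρ w| := by
    rw [hsr]
    split
    · rw [one_mul, abs_of_nonneg ‹_›]
    · rw [neg_one_mul, abs_of_neg (lt_of_not_ge ‹_›)]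
  have hsrpm : ((sr : ℝ) : ℂ) = 1 ∨ ((sr : ℝ) : ℂ) = -1 := by
    rw [hsr]
    split
    · left; norm_num
    · right; norm_num
  obtain ⟨W, hWcliff, hWD⟩ := stab_step hm hmn w hw0 hwsupp ((sr : ℝ) : ℂ) hsrpm
  refine ⟨(U * W) * Dmat n (m - 1) * (U * W)ᴴ,
    ⟨U * W, isClifford_mul hU hWcliff, rfl⟩, ?_⟩
  have hre : Qf φ ((U * W) * Dmat n (m - 1) * (U * W)ᴴ)
      = (((NR + sr * ρ w) / 2 : ℝ) : ℂ) := by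
    have e1 : (U * W) * Dmat n (m - 1) * (U * W)ᴴ
        = U * (W * Dmat n (m - 1) * Wᴴ) * Uᴴ := by
      rw [Matrix.conjTranspose_mul]
      noncomm_ring
    rw [e1, hWD, Qf_conjU, ← hχ, Qf_smul]
    rw [show (1 + ((sr : ℝ) : ℂ) • pauliOp w) * Dmat n m
        = Dmat n m + ((sr : ℝ) : ℂ) • (pauliOp w * Dmat n m) from by
      rw [add_mul, one_mul, Matrix.smul_mul]]
    rw [Qf_add, Qf_smul, Qf_pauli_Dmat χ hwsupp, hQD, ← hψdef, hreal w]
    push_cast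
    ring
  rw [hre, Complex.ofReal_re]
  have hPre : (Qf φ P).re = NR := by rw [hval, Complex.ofReal_re]
  rw [hPre]
  rw [← hsρ] at habs
  linarith [habs]

section Final

variable {n : ℕ}

def SrSet (n m : ℕ) (φ : (Fin n → Bool) → ℂ) : Set ℝ :=
  { r : ℝ | ∃ P, IsStabProj n m P ∧ r = (Qf φ P).re }

lemma Fm_eq (m : ℕ) (φ : (Fin n → Bool) → ℂ) :
    Fm n m φ = ((Real.sqrt 2) ^ m)⁻¹ * sSup (SrSet n m φ) := rfl

lemma SrSet_elem_nonneg {m : ℕ} {φ : (Fin n → Bool) → ℂ} {r : ℝ}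
    (hr : r ∈ SrSet n m φ) : 0 ≤ r := by
  obtain ⟨P, hP, rfl⟩ := hr
  obtain ⟨U, hU, hPe⟩ := hP
  have hPe' : P = U * Dmat n m * Uᴴ := hPe
  rw [hPe', Qf_conjU, Qf_Dmat, sum_conj_self, Complex.ofReal_re]
  exact Finset.sum_nonneg fun a _ => Complex.normSq_nonneg _

lemma normSq_sum_eq_one {φ : (Fin n → Bool) → ℂ} (hφ : ∑ x, ‖φ x‖ ^ 2 = 1) :
    (∑ a, Complex.normSq (φ a)) = 1 := by
  rw [← hφ]
  refine Finset.sum_congr rfl fun a _ => ?_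
  rw [← Complex.sq_norm]

lemma SrSet_elem_le_one {m : ℕ} {φ : (Fin n → Bool) → ℂ} (hφ : ∑ x, ‖φ x‖ ^ 2 = 1)
    {r : ℝ} (hr : r ∈ SrSet n m φ) : r ≤ 1 := by
  obtain ⟨P, hP, rfl⟩ := hr
  obtain ⟨U, hU, hPe⟩ := hP
  have hPe' : P = U * Dmat n m * Uᴴ := hPe
  rw [hPe', Qf_conjU, Qf_Dmat, sum_conj_self, Complex.ofReal_re]
  set χ := Uᴴ.mulVec φ with hχ
  have h1 : ∑ a, Complex.normSq (restr n m χ a) ≤ ∑ a, Complex.normSq (χ a) := by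
    refine Finset.sum_le_sum fun a _ => ?_
    unfold restr
    split
    · exact le_refl _
    · simp [Complex.normSq_nonneg]
  have hdot : ∀ v : (Fin n → Bool) → ℂ,
      dotProduct (star v) v = ∑ a, conj (v a) * v a := by
    intro v
    simp [dotProduct, Pi.star_apply, Complex.star_def]
  have h3 := unitary_norm φ hU.1
  rw [hdot, hdot, sum_conj_self, sum_conj_self] at h3
  have h2 : (∑ a, Complex.normSq (χ a)) = 1 := by
    have h4 : (∑ a, Complex.normSq (χ a)) = ∑ a, Complex.normSq (φ a) := by
      exact_mod_cast h3
    rw [h4, normSq_sum_eq_one hφ]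
  linarith

lemma SrSet_mem_D (m : ℕ) (φ : (Fin n → Bool) → ℂ) :
    ((Qf φ (Dmat n m)).re) ∈ SrSet n m φ :=
  ⟨Dmat n m, ⟨1, isClifford_one, by
    rw [Matrix.one_mul, Matrix.conjTranspose_one, Matrix.mul_one]
    rfl⟩, rfl⟩

lemma SrSet_bdd {m : ℕ} {φ : (Fin n → Bool) → ℂ} (hφ : ∑ x, ‖φ x‖ ^ 2 = 1) :
    BddAbove (SrSet n m φ) :=
  ⟨1, fun _ hr => SrSet_elem_le_one hφ hr⟩

lemma sSup_SrSet_nonneg {m : ℕ} {φ : (Fin n → Bool) → ℂ} (hφ : ∑ x, ‖φ x‖ ^ 2 = 1) :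
    0 ≤ sSup (SrSet n m φ) :=
  le_trans (SrSet_elem_nonneg (SrSet_mem_D m φ))
    (le_csSup (SrSet_bdd hφ) (SrSet_mem_D m φ))

lemma Fm_nonneg {m : ℕ} {φ : (Fin n → Bool) → ℂ} (hφ : ∑ x, ‖φ x‖ ^ 2 = 1) :
    0 ≤ Fm n m φ := by
  rw [Fm_eq]
  exact mul_nonneg (inv_nonneg.mpr (pow_nonneg (Real.sqrt_nonneg 2) m))
    (sSup_SrSet_nonneg hφ)

lemma part1 (φ : (Fin n → Bool) → ℂ) (hφ : ∑ x, ‖φ x‖ ^ 2 = 1) {m : ℕ}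
    (hm : 1 ≤ m) (hmn : m ≤ n) :
    Fm n (m - 1) φ ≥
      (Real.sqrt 2)⁻¹ * (1 + Real.sqrt (((2:ℝ) ^ m - 1) / ((4:ℝ) ^ m - 1))) * Fm n m φ := by
  set t := Real.sqrt (((2:ℝ) ^ m - 1) / ((4:ℝ) ^ m - 1)) with ht
  have htnn : 0 ≤ t := Real.sqrt_nonneg _
  set K : ℝ := (1 + t) / 2 with hK
  have hKpos : 0 < K := by rw [hK]; linarith
  have hstep : ∀ r ∈ SrSet n m φ, K * r ≤ sSup (SrSet n (m - 1) φ) := by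
    rintro r ⟨P, hP, rfl⟩
    obtain ⟨P', hP', hle⟩ := main_step hm hmn φ hP
    exact le_trans hle (le_csSup (SrSet_bdd hφ) ⟨P', hP', rfl⟩)
  have hne : (SrSet n m φ).Nonempty := ⟨_, SrSet_mem_D m φ⟩
  have hsup : K * sSup (SrSet n m φ) ≤ sSup (SrSet n (m - 1) φ) := by
    have h1 : sSup (SrSet n m φ) ≤ sSup (SrSet n (m - 1) φ) / K := by
      refine csSup_le hne fun r hr => ?_
      rw [le_div_iff₀ hKpos, mul_comm]
      exact hstep r hr
    calc K * sSup (SrSet n m φ) ≤ K * (sSup (SrSet n (m - 1) φ) / K) :=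
          mul_le_mul_of_nonneg_left h1 hKpos.le
      _ = sSup (SrSet n (m - 1) φ) := by field_simp
  rw [Fm_eq, Fm_eq]
  have hs2 : (0 : ℝ) < Real.sqrt 2 := Real.sqrt_pos.mpr (by norm_num)
  have h22 : Real.sqrt 2 * Real.sqrt 2 = 2 := Real.mul_self_sqrt (by norm_num)
  have hpow : (Real.sqrt 2) ^ m = (Real.sqrt 2) ^ (m - 1) * Real.sqrt 2 := by
    conv_lhs => rw [show m = (m - 1) + 1 from (Nat.succ_pred_eq_of_pos hm).symm]
    rw [pow_succ]
  have key : (Real.sqrt 2)⁻¹ * (1 + t) * (((Real.sqrt 2) ^ m)⁻¹ * sSup (SrSet n m φ))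
      = ((Real.sqrt 2) ^ (m - 1))⁻¹ * (K * sSup (SrSet n m φ)) := by
    rw [hpow, hK, mul_inv]
    have h2inv : (Real.sqrt 2)⁻¹ * (Real.sqrt 2)⁻¹ = 2⁻¹ := by rw [← mul_inv, h22]
    calc (Real.sqrt 2)⁻¹ * (1 + t)
          * ((((Real.sqrt 2) ^ (m-1))⁻¹ * (Real.sqrt 2)⁻¹) * sSup (SrSet n m φ))
        = ((Real.sqrt 2)⁻¹ * (Real.sqrt 2)⁻¹)
          * ((1 + t) * (((Real.sqrt 2) ^ (m-1))⁻¹ * sSup (SrSet n m φ))) := by ring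
      _ = ((Real.sqrt 2) ^ (m-1))⁻¹ * ((1 + t) / 2 * sSup (SrSet n m φ)) := by
          rw [h2inv]; ring
  rw [key]
  exact mul_le_mul_of_nonneg_left hsup
    (inv_nonneg.mpr (pow_nonneg hs2.le _))

end Final


set_option maxHeartbeats 1000000 in
/-- `F_{m−1}(φ) ≥ 2^{−1/2}(1 + √((2^m−1)/(4^m−1))) F_m(φ)`, and consequently
`F_m(φ) ≤ F_0(φ)` for `m = 1, 2, 3`. -/
theorem Fm_recursive_bound (n : ℕ) (φ : (Fin n → Bool) → ℂ)
    (hφ : ∑ x, ‖φ x‖ ^ 2 = 1) :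
    (∀ m : ℕ, 1 ≤ m → m ≤ n →
      Fm n (m - 1) φ ≥
        (Real.sqrt 2)⁻¹ * (1 + Real.sqrt ((2 ^ m - 1) / (4 ^ m - 1))) * Fm n m φ)
    ∧ (∀ m : ℕ, 1 ≤ m → m ≤ 3 → m ≤ n → Fm n m φ ≤ Fm n 0 φ) := by
  have sqrt_lb : ∀ c x : ℝ, 0 ≤ c → c ^ 2 ≤ x → c ≤ Real.sqrt x := by
    intro c x hc hcx
    have := Real.sqrt_le_sqrt hcx
    rwa [Real.sqrt_sq hc] at this
  have hs2 : (0 : ℝ) < Real.sqrt 2 := Real.sqrt_pos.mpr (by norm_num)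
  have h22 : Real.sqrt 2 * Real.sqrt 2 = 2 := Real.mul_self_sqrt (by norm_num)
  have hs_lb : (1.414 : ℝ) ≤ Real.sqrt 2 := sqrt_lb _ _ (by norm_num) (by norm_num)
  have hsinv : (Real.sqrt 2)⁻¹ = Real.sqrt 2 / 2 := by
    rw [eq_div_iff (by norm_num : (2:ℝ) ≠ 0)]
    rw [inv_mul_eq_div, div_eq_iff (ne_of_gt hs2)]
    linarith [h22]
  constructor
  · intro m hm hmn
    exact part1 φ hφ hm hmn
  · intro m hm hm3 hmn
    have hF0 : 0 ≤ Fm n 0 φ := Fm_nonneg hφ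
    have hF1 : 0 ≤ Fm n 1 φ := Fm_nonneg hφ
    have hF2 : 0 ≤ Fm n 2 φ := Fm_nonneg hφ
    have hF3 : 0 ≤ Fm n 3 φ := Fm_nonneg hφ
    interval_cases m
    · -- m = 1
      have h1 := part1 φ hφ (m := 1) (by norm_num) hmn
      set u1 := Real.sqrt (((2:ℝ) ^ 1 - 1) / ((4:ℝ) ^ 1 - 1)) with hu1def
      have hu1 : (0.577 : ℝ) ≤ u1 := sqrt_lb _ _ (by norm_num) (by norm_num)
      have hp1 : (1.414 : ℝ) * 1.577 ≤ Real.sqrt 2 * (1 + u1) :=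
        mul_le_mul hs_lb (by linarith) (by norm_num) hs2.le
      have hc1 : (1.11 : ℝ) ≤ (Real.sqrt 2)⁻¹ * (1 + u1) := by
        rw [hsinv]
        linarith [hp1]
      have h1' : (1.11 : ℝ) * Fm n 1 φ ≤ Fm n (1 - 1) φ :=
        le_trans (mul_le_mul_of_nonneg_right hc1 hF1) h1
      have h1'' : (1.11 : ℝ) * Fm n 1 φ ≤ Fm n 0 φ := h1'
      linarith
    · -- m = 2
      have h1 := part1 φ hφ (m := 1) (by norm_num) (by omega)
      have h2 := part1 φ hφ (m := 2) (by norm_num) hmn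
      set u1 := Real.sqrt (((2:ℝ) ^ 1 - 1) / ((4:ℝ) ^ 1 - 1)) with hu1def
      set u2 := Real.sqrt (((2:ℝ) ^ 2 - 1) / ((4:ℝ) ^ 2 - 1)) with hu2def
      have hu1 : (0.577 : ℝ) ≤ u1 := sqrt_lb _ _ (by norm_num) (by norm_num)
      have hu2 : (0.447 : ℝ) ≤ u2 := sqrt_lb _ _ (by norm_num) (by norm_num)
      have hp1 : (1.414 : ℝ) * 1.577 ≤ Real.sqrt 2 * (1 + u1) :=
        mul_le_mul hs_lb (by linarith) (by norm_num) hs2.le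
      have hp2 : (1.414 : ℝ) * 1.447 ≤ Real.sqrt 2 * (1 + u2) :=
        mul_le_mul hs_lb (by linarith) (by norm_num) hs2.le
      have hc1 : (1.11 : ℝ) ≤ (Real.sqrt 2)⁻¹ * (1 + u1) := by
        rw [hsinv]; linarith [hp1]
      have hc2 : (1.02 : ℝ) ≤ (Real.sqrt 2)⁻¹ * (1 + u2) := by
        rw [hsinv]; linarith [hp2]
      have h1' : (1.11 : ℝ) * Fm n 1 φ ≤ Fm n 0 φ :=
        le_trans (mul_le_mul_of_nonneg_right hc1 hF1) h1
      have h2' : (1.02 : ℝ) * Fm n 2 φ ≤ Fm n 1 φ :=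
        le_trans (mul_le_mul_of_nonneg_right hc2 hF2) h2
      linarith
    · -- m = 3
      have h1 := part1 φ hφ (m := 1) (by norm_num) (by omega)
      have h2 := part1 φ hφ (m := 2) (by norm_num) (by omega)
      have h3 := part1 φ hφ (m := 3) (by norm_num) hmn
      set u1 := Real.sqrt (((2:ℝ) ^ 1 - 1) / ((4:ℝ) ^ 1 - 1)) with hu1def
      set u2 := Real.sqrt (((2:ℝ) ^ 2 - 1) / ((4:ℝ) ^ 2 - 1)) with hu2def
      set u3 := Real.sqrt (((2:ℝ) ^ 3 - 1) / ((4:ℝ) ^ 3 - 1)) with hu3def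
      have hu1 : (0.577 : ℝ) ≤ u1 := sqrt_lb _ _ (by norm_num) (by norm_num)
      have hu2 : (0.447 : ℝ) ≤ u2 := sqrt_lb _ _ (by norm_num) (by norm_num)
      have hu3 : (0.333 : ℝ) ≤ u3 := sqrt_lb _ _ (by norm_num) (by norm_num)
      have hp1 : (1.414 : ℝ) * 1.577 ≤ Real.sqrt 2 * (1 + u1) :=
        mul_le_mul hs_lb (by linarith) (by norm_num) hs2.le
      have hp2 : (1.414 : ℝ) * 1.447 ≤ Real.sqrt 2 * (1 + u2) :=
        mul_le_mul hs_lb (by linarith) (by norm_num) hs2.le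
      have hp3 : (1.414 : ℝ) * 1.333 ≤ Real.sqrt 2 * (1 + u3) :=
        mul_le_mul hs_lb (by linarith) (by norm_num) hs2.le
      have hc1 : (1.11 : ℝ) ≤ (Real.sqrt 2)⁻¹ * (1 + u1) := by
        rw [hsinv]; linarith [hp1]
      have hc2 : (1.02 : ℝ) ≤ (Real.sqrt 2)⁻¹ * (1 + u2) := by
        rw [hsinv]; linarith [hp2]
      have hc3 : (0.94 : ℝ) ≤ (Real.sqrt 2)⁻¹ * (1 + u3) := by
        rw [hsinv]; linarith [hp3]
      have h1' : (1.11 : ℝ) * Fm n 1 φ ≤ Fm n 0 φ :=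
        le_trans (mul_le_mul_of_nonneg_right hc1 hF1) h1
      have h2' : (1.02 : ℝ) * Fm n 2 φ ≤ Fm n 1 φ :=
        le_trans (mul_le_mul_of_nonneg_right hc2 hF2) h2
      have h3' : (0.94 : ℝ) * Fm n 3 φ ≤ Fm n 2 φ :=
        le_trans (mul_le_mul_of_nonneg_right hc3 hF3) h3
      linarith
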